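/- Let A be a unital associative ℝ-algebra with involution which is centrally bounded: for every a ∈ A there exists an element c of the center of A such that c*c − a*a ∈ Σ_A. Then for every left ideal I of A, the set √α(I) = {a ∈ A : −a*a ∈ Σ_A + I + I*} is a left ideal of A; in particular it contains I, it is closed under addition, and ab ∈ √α(I) whenever a ∈ A and b ∈ √α(I). -/

import Mathlib

/-!
Write `T = Σ_A + I + I*`, an additive monoid with `Σ_A + T ⊆ T`, so that `a ∈ √α(I)` iff
`-a*a ∈ T`. Closure under addition is the parallelogram law
`-(a+b)*(a+b) = (a-b)*(a-b) - 2a*a - 2b*b`. For a central `c`, conjugation `x ↦ c*xc` maps `T`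
into itself, so `cb ∈ √α(I)` whenever `b` is. Finally, if `c` is a central bound for `a`, then
`(cb)*(cb) - (ab)*(ab) = b*(c*c - a*a)b ∈ Σ_A`, and `-(ab)*(ab) ∈ Σ_A + T ⊆ T`.
-/

noncomputable section

/-- `Σ_A`: the set of finite sums of elements `a*a`. -/
def SigmaSet (A : Type) [Ring A] [StarRing A] : Set A :=
  {s | ∃ (r : ℕ) (b : Fin r → A), s = ∑ i, star (b i) * b i}

/-- `√α(I) = {a : −a*a ∈ Σ_A + I + I*}`. -/
def alphaRad (A : Type) [Ring A] [StarRing A] (I : Submodule A A) : Set A :=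
  {a : A | ∃ s ∈ SigmaSet A, ∃ u ∈ I, ∃ w ∈ I, -(star a * a) = s + u + star w}

namespace SigmaSet

variable {A : Type} [Ring A] [StarRing A]

theorem zero_mem : (0 : A) ∈ SigmaSet A := ⟨0, ![], by simp⟩

theorem star_mul_self_mem (a : A) : star a * a ∈ SigmaSet A := ⟨1, fun _ => a, by simp⟩

theorem add_mem {s t : A} (hs : s ∈ SigmaSet A) (ht : t ∈ SigmaSet A) :
    s + t ∈ SigmaSet A := by
  obtain ⟨r, b, rfl⟩ := hs
  obtain ⟨r', b', rfl⟩ := ht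
  refine ⟨r + r', Fin.append b b', ?_⟩
  simp [Fin.sum_univ_add]

theorem star_mul_mul_mem {s : A} (hs : s ∈ SigmaSet A) (x : A) :
    star x * s * x ∈ SigmaSet A := by
  obtain ⟨r, b, rfl⟩ := hs
  refine ⟨r, fun i => b i * x, ?_⟩
  simp only [Finset.mul_sum, Finset.sum_mul, star_mul, mul_assoc]

end SigmaSet

section

variable {A : Type} [Ring A] [StarRing A]

/-- `Σ_A + I + I*` -/
def sigmaAddIdeal (I : Submodule A A) : AddSubmonoid A where
  carrier := {x | ∃ s ∈ SigmaSet A, ∃ u ∈ I, ∃ w ∈ I, x = s + u + star w}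
  zero_mem' := ⟨0, SigmaSet.zero_mem, 0, I.zero_mem, 0, I.zero_mem, by simp⟩
  add_mem' := by
    rintro _ _ ⟨s, hs, u, hu, w, hw, rfl⟩ ⟨s', hs', u', hu', w', hw', rfl⟩
    refine ⟨s + s', SigmaSet.add_mem hs hs', u + u', I.add_mem hu hu', w + w',
      I.add_mem hw hw', ?_⟩
    rw [star_add]
    abel

theorem star_mul_mul_eq_of_mem_center {c : A} (hc : c ∈ Set.center A) (y : A) :
    star c * y * c = star c * c * y := by
  rw [mul_assoc, Semigroup.mem_center_iff.1 hc y, ← mul_assoc]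

variable {I : Submodule A A}

theorem mem_alphaRad_iff {a : A} : a ∈ alphaRad A I ↔ -(star a * a) ∈ sigmaAddIdeal I :=
  Iff.rfl

theorem mem_sigmaAddIdeal_of_mem_sigmaSet {s : A} (hs : s ∈ SigmaSet A) :
    s ∈ sigmaAddIdeal I :=
  ⟨s, hs, 0, I.zero_mem, 0, I.zero_mem, by simp⟩

theorem mem_sigmaAddIdeal_of_mem {u : A} (hu : u ∈ I) : u ∈ sigmaAddIdeal I :=
  ⟨0, SigmaSet.zero_mem, u, hu, 0, I.zero_mem, by simp⟩

theorem star_mul_mul_mem_sigmaAddIdeal {c x : A} (hc : c ∈ Set.center A)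
    (hx : x ∈ sigmaAddIdeal I) : star c * x * c ∈ sigmaAddIdeal I := by
  obtain ⟨s, hs, u, hu, w, hw, rfl⟩ := hx
  set z := star c * c
  have hz : z ∈ Set.center A := Set.mul_mem_center (Set.star_mem_center hc) hc
  have star_eq : z * star w = star (z * w) := by
    rw [star_mul, IsSelfAdjoint.star_mul_self c, Semigroup.mem_center_iff.1 hz]
  refine ⟨star c * s * c, SigmaSet.star_mul_mul_mem hs c, z * u, I.smul_mem z hu,
    z * w, I.smul_mem z hw, ?_⟩
  rw [mul_add, mul_add, add_mul, add_mul, star_mul_mul_eq_of_mem_center hc u,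
    star_mul_mul_eq_of_mem_center hc (star w), star_eq]

theorem mem_alphaRad_of_mem {a : A} (ha : a ∈ I) : a ∈ alphaRad A I := by
  rw [mem_alphaRad_iff, ← neg_mul]
  exact mem_sigmaAddIdeal_of_mem (I.smul_mem _ ha)

theorem add_mem_alphaRad {a b : A} (ha : a ∈ alphaRad A I) (hb : b ∈ alphaRad A I) :
    a + b ∈ alphaRad A I := by
  rw [mem_alphaRad_iff] at *
  have key : -(star (a + b) * (a + b)) = star (a - b) * (a - b) +
      (-(star a * a) + -(star a * a)) + (-(star b * b) + -(star b * b)) := by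
    simp only [star_add, star_sub]
    noncomm_ring
  rw [key]
  exact add_mem (add_mem (mem_sigmaAddIdeal_of_mem_sigmaSet (SigmaSet.star_mul_self_mem _))
    (add_mem ha ha)) (add_mem hb hb)

theorem mem_alphaRad_of_star_mul_self_sub_mem {x y : A} (hx : x ∈ alphaRad A I)
    (hxy : star x * x - star y * y ∈ SigmaSet A) : y ∈ alphaRad A I := by
  rw [mem_alphaRad_iff] at *
  rw [show -(star y * y) = (star x * x - star y * y) + -(star x * x) by abel]
  exact add_mem (mem_sigmaAddIdeal_of_mem_sigmaSet hxy) hx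

theorem mul_mem_alphaRad_of_mem_center {b c : A} (hc : c ∈ Set.center A)
    (hb : b ∈ alphaRad A I) : c * b ∈ alphaRad A I := by
  rw [mem_alphaRad_iff] at *
  have hz : star c * c ∈ Set.center A := Set.mul_mem_center (Set.star_mem_center hc) hc
  have key : -(star (c * b) * (c * b)) = star c * -(star b * b) * c :=
    calc -(star (c * b) * (c * b)) = -(star b * (star c * c) * b) := by
          rw [star_mul]; noncomm_ring
      _ = -(star c * c * (star b * b)) := by
          rw [Semigroup.mem_center_iff.1 hz, mul_assoc]
      _ = star c * -(star b * b) * c := by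
          rw [star_mul_mul_eq_of_mem_center hc, mul_neg]
  rw [key]
  exact star_mul_mul_mem_sigmaAddIdeal hc hb

variable (A) in
def IsCentrallyBounded : Prop :=
  ∀ a : A, ∃ c ∈ Set.center A, star c * c - star a * a ∈ SigmaSet A

theorem mul_mem_alphaRad (hA : IsCentrallyBounded A) (a : A) {b : A}
    (hb : b ∈ alphaRad A I) : a * b ∈ alphaRad A I := by
  obtain ⟨c, hc, hca⟩ := hA a
  refine mem_alphaRad_of_star_mul_self_sub_mem (mul_mem_alphaRad_of_mem_center hc hb) ?_
  have key : star (c * b) * (c * b) - star (a * b) * (a * b) =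
      star b * (star c * c - star a * a) * b := by
    simp only [star_mul]
    noncomm_ring
  rw [key]
  exact SigmaSet.star_mul_mul_mem hca b

def alphaRadSubmodule (hA : IsCentrallyBounded A) (I : Submodule A A) : Submodule A A where
  carrier := alphaRad A I
  zero_mem' := mem_alphaRad_of_mem I.zero_mem
  add_mem' := add_mem_alphaRad
  smul_mem' a _ hb := mul_mem_alphaRad hA a hb

end

theorem stmt16_general (A : Type) [Ring A] [StarRing A]
    (hcb : ∀ a : A, ∃ c : A, (∀ b : A, c * b = b * c) ∧ star c * c - star a * a ∈ SigmaSet A)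
    (I : Submodule A A) :
    (∃ J : Submodule A A, (J : Set A) = alphaRad A I) ∧
    (∀ a ∈ I, a ∈ alphaRad A I) ∧
    (∀ a b : A, a ∈ alphaRad A I → b ∈ alphaRad A I → a + b ∈ alphaRad A I) ∧
    (∀ a b : A, b ∈ alphaRad A I → a * b ∈ alphaRad A I) := by
  have hA : IsCentrallyBounded A := fun a => by
    obtain ⟨c, hc, hca⟩ := hcb a
    exact ⟨c, Semigroup.mem_center_iff.2 fun b => (hc b).symm, hca⟩
  exact ⟨⟨alphaRadSubmodule hA I, rfl⟩, fun _ => mem_alphaRad_of_mem,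
    fun _ _ => add_mem_alphaRad, fun a _ => mul_mem_alphaRad hA a⟩

/-- In a centrally bounded `*`-algebra, `√α(I)` is a left ideal for every left ideal `I`:
it contains `I`, is closed under addition, and is closed under left multiplication. -/
theorem stmt16 (A : Type) [Ring A] [Algebra ℝ A] [StarRing A] [StarModule ℝ A]
    (hcb : ∀ a : A, ∃ c : A, (∀ b : A, c * b = b * c) ∧ star c * c - star a * a ∈ SigmaSet A)
    (I : Submodule A A) :
    (∃ J : Submodule A A, (J : Set A) = alphaRad A I) ∧
    (∀ a ∈ I, a ∈ alphaRad A I) ∧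
    (∀ a b : A, a ∈ alphaRad A I → b ∈ alphaRad A I → a + b ∈ alphaRad A I) ∧
    (∀ a b : A, b ∈ alphaRad A I → a * b ∈ alphaRad A I) :=
  stmt16_general A hcb I

end
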